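/- If a hypertree Θ on [n] carries partial conjugations x_{i,D} and x_{j,E} (as outer automorphism classes of W_n), then x_{i,D} and x_{j,E} commute in Out^0(W_n). -/

import Mathlib

/-- A hypergraph on `[n]`, identified with its set of hyperedges:
every hyperedge has at least two vertices. -/
def IsHypergraph {n : ℕ} (E : Finset (Finset (Fin n))) : Prop :=
  ∀ e ∈ E, 2 ≤ e.card

/-- Data of a walk: a length `len`, a sequence of `len + 1` vertices and
`len` hyperedges. -/
structure WalkData (n : ℕ) where
  len : ℕ
  verts : Fin (len + 1) → Fin n
  eds : Fin len → Finset (Fin n)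

/-- `s` is a simple walk from `v` to `w` in the hypergraph `E`: an alternating
sequence of pairwise distinct vertices and pairwise distinct hyperedges
`v = v₀, e₁, v₁, …, e_p, v_p = w` with `{vₖ, vₖ₊₁} ⊆ eₖ₊₁`. -/
def IsSimpleWalk {n : ℕ} (E : Finset (Finset (Fin n))) (v w : Fin n)
    (s : WalkData n) : Prop :=
  s.verts 0 = v ∧ s.verts (Fin.last s.len) = w ∧
  Function.Injective s.verts ∧ Function.Injective s.eds ∧
  ∀ k : Fin s.len, s.eds k ∈ E ∧ s.verts k.castSucc ∈ s.eds k ∧ s.verts k.succ ∈ s.eds k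

/-- A hypertree: a hypergraph in which any two vertices are joined by a unique
simple walk. -/
def IsHypertree {n : ℕ} (E : Finset (Finset (Fin n))) : Prop :=
  IsHypergraph E ∧ ∀ v w : Fin n, ∃! s : WalkData n, IsSimpleWalk E v w s

/-- The hypergraph `E` carries the partial conjugation `x_{i,D}`: every simple walk
from a vertex of `D` to a vertex of `[n] ∖ (D ∪ {i})` visits `i`. -/
def Carries {n : ℕ} (E : Finset (Finset (Fin n))) (i : Fin n)
    (D : Finset (Fin n)) : Prop :=
  ∀ d ∈ D, ∀ j : Fin n, j ∉ D → j ≠ i →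
    ∀ s : WalkData n, IsSimpleWalk E d j s → ∃ k, s.verts k = i

/-- Defining relations of `Wₙ`: each generator squares to the identity. -/
def wrels (n : ℕ) : Set (FreeGroup (Fin n)) :=
  {r | ∃ i : Fin n, r = FreeGroup.of i * FreeGroup.of i}

/-- The universal right-angled Coxeter group `Wₙ`. -/
abbrev W (n : ℕ) := PresentedGroup (wrels n)

/-- The generator `aᵢ` of `Wₙ`. -/
def gen {n : ℕ} (i : Fin n) : W n := PresentedGroup.of i

/-- `φ` is the partial conjugation with acting letter `aᵢ` and domain `D`. -/
def IsPC {n : ℕ} (φ : W n ≃* W n) (i : Fin n) (D : Finset (Fin n)) : Prop :=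
  (∀ j ∈ D, φ (gen j) = gen i * gen j * gen i) ∧ (∀ j ∉ D, φ (gen j) = gen j)


/-!
In a hypertree two distinct vertices `i`, `j` cannot both separate a third vertex `v` from
each other: cutting the walk from `v` to `i` at its visit to `j` gives a walk from `v` to `j`
avoiding `i`. For carried partial conjugations `x_{i,D}`, `x_{j,F}` with `i ≠ j` this leaves
three configurations, according to whether `j ∈ D` and `i ∈ F`: `D` and `F` are disjoint,
one is contained in the other, or `D ∪ F` is everything. In the first two cases the
automorphisms commute, in the last their commutator is conjugation by `(aᵢ aⱼ)²`; each
case is a computation on the generators.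
-/

variable {n : ℕ} {E : Finset (Finset (Fin n))}

namespace WalkData

def reverse (s : WalkData n) : WalkData n :=
  ⟨s.len, fun k => s.verts k.rev, fun k => s.eds k.rev⟩

def take (s : WalkData n) (p : Fin (s.len + 1)) : WalkData n :=
  ⟨p, fun k => s.verts (k.castLE p.isLt), fun k => s.eds (k.castLE (Nat.lt_succ_iff.mp p.isLt))⟩

end WalkData

namespace IsSimpleWalk

variable {v w : Fin n} {s : WalkData n}

lemma reverse (h : IsSimpleWalk E v w s) : IsSimpleWalk E w v s.reverse := by
  obtain ⟨h0, hl, hv, he, hk⟩ := h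
  refine ⟨?_, ?_, hv.comp Fin.rev_injective, he.comp Fin.rev_injective, fun k => ?_⟩
  · show s.verts (Fin.rev 0) = w
    rwa [Fin.rev_zero]
  · show s.verts (Fin.rev (Fin.last _)) = v
    rwa [Fin.rev_last]
  obtain ⟨hmem, hcast, hsucc⟩ := hk k.rev
  refine ⟨hmem, ?_, ?_⟩
  · show s.verts k.castSucc.rev ∈ _
    rwa [Fin.rev_castSucc]
  · show s.verts k.succ.rev ∈ _
    rwa [Fin.rev_succ]

lemma take (h : IsSimpleWalk E v w s) (p : Fin (s.len + 1)) :
    IsSimpleWalk E v (s.verts p) (s.take p) := by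
  obtain ⟨h0, -, hv, he, hk⟩ := h
  exact ⟨h0, rfl, hv.comp (Fin.castLE_injective _), he.comp (Fin.castLE_injective _),
    fun k => hk (k.castLE _)⟩

end IsSimpleWalk

def Separates (E : Finset (Finset (Fin n))) (i v w : Fin n) : Prop :=
  ∀ s : WalkData n, IsSimpleWalk E v w s → ∃ k, s.verts k = i

lemma Separates.symm {i v w : Fin n} (h : Separates E i v w) : Separates E i w v :=
  fun s hs => by
    obtain ⟨k, hk⟩ := h s.reverse hs.reverse
    exact ⟨k.rev, hk⟩

lemma IsSimpleWalk.not_separates_of_separates {i j v : Fin n} {s : WalkData n}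
    (hs : IsSimpleWalk E v i s) (hji : j ≠ i) (h : Separates E j v i) :
    ¬ Separates E i v j := by
  intro h'
  obtain ⟨p, hp⟩ := h s hs
  obtain ⟨k, hk⟩ := h' _ (hp ▸ hs.take p)
  obtain ⟨-, hlast, hinj, -⟩ := hs
  have hk_last : k.castLE p.isLt = Fin.last s.len := hinj (hk.trans hlast.symm)
  have hp_last : p = Fin.last s.len := by
    have hk_val : (k : ℕ) = s.len := congrArg Fin.val hk_last
    have hk_le : (k : ℕ) ≤ p := Nat.lt_succ_iff.mp k.isLt
    exact Fin.ext (by rw [Fin.val_last]; omega)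
  exact hji (hp ▸ hp_last ▸ hlast)

namespace Carries

variable {i j : Fin n} {D F : Finset (Fin n)}

lemma disjoint (hcD : Carries E i D) (hcF : Carries E j F) (hE : IsHypertree E)
    (hji : j ≠ i) (hjD : j ∉ D) (hiF : i ∉ F) : Disjoint D F := by
  refine Finset.disjoint_left.mpr fun k hkD hkF => ?_
  obtain ⟨s, hs, -⟩ := hE.2 k i
  exact hs.not_separates_of_separates hji (hcF k hkF i hiF hji.symm) (hcD k hkD j hjD hji)

lemma subset (hcD : Carries E i D) (hcF : Carries E j F) (hE : IsHypertree E)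
    (hji : j ≠ i) (hjD : j ∈ D) (hiF : i ∉ F) : F ⊆ D := by
  intro k hkF
  by_contra hkD
  obtain ⟨s, hs, -⟩ := hE.2 k i
  exact hs.not_separates_of_separates hji (hcF k hkF i hiF hji.symm)
    (Separates.symm (hcD j hjD k hkD (ne_of_mem_of_not_mem hkF hiF)))

lemma mem_or_mem (hcD : Carries E i D) (hcF : Carries E j F) (hE : IsHypertree E)
    (hji : j ≠ i) (hjD : j ∈ D) (hiF : i ∈ F) (k : Fin n) : k ∈ D ∨ k ∈ F := by
  by_contra! hk
  obtain ⟨s, hs, -⟩ := hE.2 k i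
  exact hs.not_separates_of_separates hji
    (Separates.symm (hcF i hiF k hk.2 (ne_of_mem_of_not_mem hjD hk.1).symm))
    (Separates.symm (hcD j hjD k hk.1 (ne_of_mem_of_not_mem hiF hk.2).symm))

end Carries

@[simp]
lemma gen_mul_self (i : Fin n) : gen i * gen i = 1 :=
  (QuotientGroup.eq_one_iff _).mpr (Subgroup.subset_normalClosure ⟨i, rfl⟩)

@[simp]
lemma gen_mul_gen_mul (i : Fin n) (x : W n) : gen i * (gen i * x) = x := by
  rw [← mul_assoc, gen_mul_self, one_mul]

@[simp]
lemma inv_gen (i : Fin n) : (gen i)⁻¹ = gen i :=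
  inv_eq_of_mul_eq_one_right (gen_mul_self i)

section

variable {φ ψ : W n ≃* W n}

lemma apply_apply_eq_conj_of_forall_gen (w : W n)
    (h : ∀ k, φ (ψ (gen k)) = w * ψ (φ (gen k)) * w⁻¹) (x : W n) :
    φ (ψ x) = w * ψ (φ x) * w⁻¹ := by
  have hext : φ.toMonoidHom.comp ψ.toMonoidHom =
      (MulAut.conj w).toMonoidHom.comp (ψ.toMonoidHom.comp φ.toMonoidHom) :=
    PresentedGroup.ext fun k => h k
  simpa using DFunLike.congr_fun hext x

lemma apply_apply_comm_of_forall_gen (h : ∀ k, φ (ψ (gen k)) = ψ (φ (gen k))) (x : W n) :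
    φ (ψ x) = ψ (φ x) := by
  simpa using apply_apply_eq_conj_of_forall_gen 1 (by simpa using h) x

end

namespace IsPC

variable {φ ψ : W n ≃* W n} {i j : Fin n} {D F : Finset (Fin n)}

lemma apply_gen (hφ : IsPC φ i D) (k : Fin n) :
    φ (gen k) = if k ∈ D then gen i * gen k * gen i else gen k := by
  split_ifs with hk
  exacts [hφ.1 k hk, hφ.2 k hk]

lemma apply_apply_comm_of_eq (hφ : IsPC φ i D) (hψ : IsPC ψ i F) (x : W n) :
    φ (ψ x) = ψ (φ x) := by
  refine apply_apply_comm_of_forall_gen (fun k => ?_) x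
  by_cases hkD : k ∈ D <;> by_cases hkF : k ∈ F <;>
    simp [hφ.apply_gen, hψ.apply_gen, hkD, hkF, mul_assoc]

lemma apply_apply_comm_of_disjoint (hφ : IsPC φ i D) (hψ : IsPC ψ j F) (hjD : j ∉ D)
    (hiF : i ∉ F) (hDF : Disjoint D F) (x : W n) : φ (ψ x) = ψ (φ x) := by
  refine apply_apply_comm_of_forall_gen (fun k => ?_) x
  by_cases hkD : k ∈ D
  · have hkF : k ∉ F := Finset.disjoint_left.mp hDF hkD
    simp [hφ.apply_gen, hψ.apply_gen, hkD, hkF, hiF, mul_assoc]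
  · by_cases hkF : k ∈ F <;> simp [hφ.apply_gen, hψ.apply_gen, hkD, hkF, hjD, mul_assoc]

lemma apply_apply_comm_of_subset (hφ : IsPC φ i D) (hψ : IsPC ψ j F) (hjD : j ∈ D)
    (hiF : i ∉ F) (hFD : F ⊆ D) (x : W n) : φ (ψ x) = ψ (φ x) := by
  refine apply_apply_comm_of_forall_gen (fun k => ?_) x
  by_cases hkF : k ∈ F
  · have hkD : k ∈ D := hFD hkF
    simp [hφ.apply_gen, hψ.apply_gen, hkD, hkF, hjD, hiF, mul_assoc]
  · by_cases hkD : k ∈ D <;> simp [hφ.apply_gen, hψ.apply_gen, hkD, hkF, hiF, mul_assoc]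

lemma apply_apply_eq_conj_of_mem_or_mem (hφ : IsPC φ i D) (hψ : IsPC ψ j F) (hjD : j ∈ D)
    (hiF : i ∈ F) (hDF : ∀ k, k ∈ D ∨ k ∈ F) (x : W n) :
    φ (ψ x) = (gen i * gen j) ^ 2 * ψ (φ x) * ((gen i * gen j) ^ 2)⁻¹ := by
  refine apply_apply_eq_conj_of_forall_gen _ (fun k => ?_) x
  rcases hDF k with hkD | hkF
  · by_cases hkF : k ∈ F <;>
      simp [hφ.apply_gen, hψ.apply_gen, hkD, hkF, hjD, hiF, mul_assoc, pow_two]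
  · by_cases hkD : k ∈ D <;>
      simp [hφ.apply_gen, hψ.apply_gen, hkD, hkF, hjD, hiF, mul_assoc, pow_two]

end IsPC

theorem stmt14_general (n : ℕ) (E : Finset (Finset (Fin n))) (hE : IsHypertree E)
    (i j : Fin n) (D F : Finset (Fin n))
    (φ ψ : W n ≃* W n) (hφ : IsPC φ i D) (hψ : IsPC ψ j F)
    (hcD : Carries E i D) (hcF : Carries E j F) :
    ∃ w : W n, ∀ x : W n, φ (ψ x) = w * ψ (φ x) * w⁻¹ := by
  obtain rfl | hji := eq_or_ne j i
  · exact ⟨1, by simpa using hφ.apply_apply_comm_of_eq hψ⟩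
  by_cases hjD : j ∈ D <;> by_cases hiF : i ∈ F
  · exact ⟨_, hφ.apply_apply_eq_conj_of_mem_or_mem hψ hjD hiF
      (hcD.mem_or_mem hcF hE hji hjD hiF)⟩
  · have hFD : F ⊆ D := hcD.subset hcF hE hji hjD hiF
    exact ⟨1, by simpa using hφ.apply_apply_comm_of_subset hψ hjD hiF hFD⟩
  · have hDF : D ⊆ F := hcF.subset hcD hE hji.symm hiF hjD
    exact ⟨1, by simpa using fun x => (hψ.apply_apply_comm_of_subset hφ hiF hjD hDF x).symm⟩
  · have hDF : Disjoint D F := hcD.disjoint hcF hE hji hjD hiF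
    exact ⟨1, by simpa using hφ.apply_apply_comm_of_disjoint hψ hjD hiF hDF⟩

/-- If a hypertree `Θ` carries the partial conjugations `x_{i,D}` and `x_{j,F}`, then
these commute in `Out⁰(Wₙ)`, i.e. their commutator (as automorphisms of `Wₙ`) is an
inner automorphism. -/
theorem stmt14 (n : ℕ) (E : Finset (Finset (Fin n))) (hE : IsHypertree E)
    (i j : Fin n) (D F : Finset (Fin n)) (hi : i ∉ D) (hj : j ∉ F)
    (φ ψ : W n ≃* W n) (hφ : IsPC φ i D) (hψ : IsPC ψ j F)
    (hcD : Carries E i D) (hcF : Carries E j F) :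
    ∃ w : W n, ∀ x : W n, φ (ψ x) = w * ψ (φ x) * w⁻¹ :=
  stmt14_general n E hE i j D F φ ψ hφ hψ hcD hcF
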